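/- arXiv:1808.06320 — 7 statements merged into one kernel-verified Lean document; each statement's English description precedes it below -/
import Mathlib

section
/- Let d ≥ 1 and n = 2. Mechanism 1, which on profile (x_1, x_2) outputs the probability measure (1/4)δ_{x_1} + (1/4)δ_{x_2} + (1/2)δ_{(x_1+x_2)/2}, is group-strategyproof. -/
open MeasureTheory ENNReal

noncomputable section

/-- Points in `d`-dimensional Euclidean space. -/
abbrev Pt (d : ℕ) : Type := EuclideanSpace ℝ (Fin d)

/-- Group-strategyproofness: for every profile, nonempty coalition, and deviation by
the coalition, some member of the coalition does not strictly gain. -/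
def GroupStrategyproof {d n : ℕ} (f : (Fin n → Pt d) → Measure (Pt d)) : Prop :=
  ∀ x x' : Fin n → Pt d, ∀ S : Finset (Fin n), S.Nonempty →
    (∀ i ∉ S, x' i = x i) →
    ∃ i ∈ S, ∫ y, ‖y - x i‖ ∂(f x') ≥ ∫ y, ‖y - x i‖ ∂(f x)

/-- Mechanism 1 for two agents: output `x 0` w.p. 1/4, `x 1` w.p. 1/4, and the
midpoint `(x 0 + x 1)/2` w.p. 1/2. -/
def mech1 {d : ℕ} (x : Fin 2 → Pt d) : Measure (Pt d) :=
  (1/4 : ℝ≥0∞) • Measure.dirac (x 0) + (1/4 : ℝ≥0∞) • Measure.dirac (x 1)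
    + (1/2 : ℝ≥0∞) • Measure.dirac ((2 : ℝ)⁻¹ • (x 0 + x 1))

/-!
Let `mech1Cost a b p` be the expected distance from `p` to the outcome when the reports are `a`
and `b`. A truthful agent pays `‖a - b‖ / 2`. Since the lottery has total mass one, the triangle
inequality gives `mech1Cost a b p + mech1Cost a b q ≥ ‖p - q‖`, so the two agents together can
never both gain. A single agent moving its report from `a` to `a'` loses `‖a' - a‖ / 4` on its
own atom and gains at most that much on the midpoint, which moves by `‖a' - a‖ / 2` and carries
weight `1/2`.
-/

theorem integral_mech1 {d : ℕ} (x : Fin 2 → Pt d) (g : Pt d → ℝ) :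
    ∫ y, g y ∂(mech1 x) = g (x 0) / 4 + g (x 1) / 4 + g ((2 : ℝ)⁻¹ • (x 0 + x 1)) / 2 := by
  have hsmul : ∀ (c : ℝ≥0∞) (a : Pt d), c ≠ ∞ → Integrable g (c • Measure.dirac a) :=
    fun _ _ hc => (integrable_dirac enorm_lt_top).smul_measure hc
  rw [mech1, integral_add_measure ((hsmul _ _ (by norm_num)).add_measure (hsmul _ _ (by norm_num)))
      (hsmul _ _ (by norm_num)), integral_add_measure (hsmul _ _ (by norm_num))
      (hsmul _ _ (by norm_num))]
  simp only [integral_smul_measure, integral_dirac]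
  norm_num
  ring

section Cost

variable {E : Type*} [NormedAddCommGroup E] [NormedSpace ℝ E]

def mech1Cost (a b p : E) : ℝ :=
  ‖a - p‖ / 4 + ‖b - p‖ / 4 + ‖(2 : ℝ)⁻¹ • (a + b) - p‖ / 2

theorem mech1Cost_comm (a b p : E) : mech1Cost a b p = mech1Cost b a p := by
  simp only [mech1Cost, add_comm a b]
  ring

theorem norm_half_smul_add_sub (a b p : E) :
    ‖(2 : ℝ)⁻¹ • (a + b) - p‖ = ‖(a - p) + (b - p)‖ / 2 := by
  rw [show (2 : ℝ)⁻¹ • (a + b) - p = (2 : ℝ)⁻¹ • ((a - p) + (b - p)) by module, norm_smul]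
  norm_num
  ring

theorem mech1Cost_left (a b : E) : mech1Cost a b a = ‖a - b‖ / 2 := by
  simp only [mech1Cost, norm_half_smul_add_sub, sub_self, norm_zero, zero_add, zero_div,
    norm_sub_rev b a]
  ring

theorem mech1Cost_right (a b : E) : mech1Cost a b b = ‖a - b‖ / 2 := by
  rw [mech1Cost_comm, mech1Cost_left, norm_sub_rev]

theorem norm_sub_le_mech1Cost_add (a b p q : E) :
    ‖p - q‖ ≤ mech1Cost a b p + mech1Cost a b q := by
  have key : ∀ z : E, ‖p - q‖ ≤ ‖z - p‖ + ‖z - q‖ := fun z => by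
    simpa only [dist_eq_norm, norm_sub_rev p z] using dist_triangle p z q
  have h₁ := key a
  have h₂ := key b
  have h₃ := key ((2 : ℝ)⁻¹ • (a + b))
  simp only [mech1Cost]
  linarith

theorem mech1Cost_left_le_deviation (a a' b : E) : mech1Cost a b a ≤ mech1Cost a' b a := by
  have hmid : ‖b - a‖ - ‖a' - a‖ ≤ 2 * ‖(2 : ℝ)⁻¹ • (a' + b) - a‖ := by
    rw [norm_half_smul_add_sub, mul_div_cancel₀ _ two_ne_zero, add_comm]
    simpa using norm_sub_le ((b - a) + (a' - a)) (a' - a)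
  rw [mech1Cost_left, norm_sub_rev, mech1Cost]
  linarith

theorem mech1Cost_right_le_deviation (a b b' : E) : mech1Cost a b b ≤ mech1Cost a b' b := by
  simpa only [mech1Cost_comm a] using mech1Cost_left_le_deviation b b' a

end Cost

theorem integral_norm_sub_mech1 {d : ℕ} (x : Fin 2 → Pt d) (p : Pt d) :
    ∫ y, ‖y - p‖ ∂(mech1 x) = mech1Cost (x 0) (x 1) p :=
  integral_mech1 x _

theorem mech1_group_strategyproof_general {d : ℕ} :
    GroupStrategyproof (mech1 (d := d)) := by
  intro x x' S hS hfix
  simp only [integral_norm_sub_mech1, ge_iff_le]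
  by_cases h1 : (1 : Fin 2) ∈ S
  · by_cases h0 : (0 : Fin 2) ∈ S
    · by_contra! hgain
      have htotal := norm_sub_le_mech1Cost_add (x' 0) (x' 1) (x 0) (x 1)
      linarith [hgain 0 h0, hgain 1 h1, mech1Cost_left (x 0) (x 1), mech1Cost_right (x 0) (x 1)]
    · rw [hfix 0 h0]
      exact ⟨1, h1, mech1Cost_right_le_deviation _ _ _⟩
  · have h0 : (0 : Fin 2) ∈ S := by
      obtain ⟨i, hi⟩ := hS
      fin_cases i
      exacts [hi, absurd hi h1]
    rw [hfix 1 h1]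
    exact ⟨0, h0, mech1Cost_left_le_deviation _ _ _⟩

/-- For `d ≥ 1` and `n = 2`, Mechanism 1 is group-strategyproof. -/
theorem mech1_group_strategyproof {d : ℕ} (hd : 1 ≤ d) :
    GroupStrategyproof (mech1 (d := d)) :=
  mech1_group_strategyproof_general
end
end

section
/- Let d ≥ 1 and n = 2. Mechanism 1, which on profile (x_1, x_2) outputs (1/4)δ_{x_1} + (1/4)δ_{x_2} + (1/2)δ_{(x_1+x_2)/2}, is a 3/2-approximation for maximum cost: for every profile x = (x_1, x_2), E_{y∼f(x)} max_{i∈{1,2}} ‖y − x_i‖ ≤ (3/2) · inf_{y∈ℝ^d} max_{i∈{1,2}} ‖y − x_i‖. -/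
open MeasureTheory ENNReal

noncomputable section

/-- For `d ≥ 1` and `n = 2`, Mechanism 1 is a 3/2-approximation for maximum cost. -/
theorem mech1_maxCost_three_halves_approx {d : ℕ} (hd : 1 ≤ d) (x : Fin 2 → Pt d) :
    ∫ y, max ‖y - x 0‖ ‖y - x 1‖ ∂(mech1 x)
      ≤ (3 / 2 : ℝ) * ⨅ y : Pt d, max ‖y - x 0‖ ‖y - x 1‖ := by
  classical
  set f : Pt d → ℝ := fun y => max ‖y - x 0‖ ‖y - x 1‖ with hfdef
  have hf : Continuous f := by
    apply Continuous.max <;> exact (continuous_id.sub continuous_const).norm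
  set m : Pt d := (2 : ℝ)⁻¹ • (x 0 + x 1) with hm
  set D : ℝ := ‖x 0 - x 1‖ with hD
  have hdir : ∀ a : Pt d, Integrable f (Measure.dirac a) := fun a =>
    ⟨hf.aestronglyMeasurable, by
      simp [HasFiniteIntegral, lintegral_dirac]⟩
  have hint : ∀ (a : Pt d) (c : ℝ≥0∞), c ≠ ⊤ → Integrable f (c • Measure.dirac a) :=
    fun a c hc => (hdir a).smul_measure hc
  have hI : ∫ y, f y ∂(mech1 x) = (3/4 : ℝ) * D := by
    rw [mech1, integral_add_measure, integral_add_measure, integral_smul_measure,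
      integral_smul_measure, integral_smul_measure, integral_dirac, integral_dirac,
      integral_dirac]
    · have h0 : f (x 0) = D := by
        simp [hfdef, hD, norm_sub_rev (x 0) (x 1)]
      have h1 : f (x 1) = D := by
        simp [hfdef, hD]
        exact norm_sub_rev _ _
      have hm0 : m - x 0 = (2 : ℝ)⁻¹ • (x 1 - x 0) := by
        rw [hm]
        rw [smul_sub, smul_add]
        module
      have hm1 : m - x 1 = (2 : ℝ)⁻¹ • (x 0 - x 1) := by
        rw [hm]; module
      have h2 : f m = D / 2 := by
        simp [hfdef, hm0, hm1, norm_smul, hD, norm_sub_rev (x 0) (x 1), div_eq_inv_mul]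
      rw [h0, h1, h2]
      norm_num
      ring
    · exact hint _ _ (by norm_num)
    · exact hint _ _ (by norm_num)
    · exact ((hint _ (1/4) (by norm_num)).add_measure (hint _ (1/4) (by norm_num)) : _)
    · exact hint _ _ (by norm_num)
  rw [hI]
  have hinf : D / 2 ≤ ⨅ y : Pt d, f y := by
    apply le_ciInf
    intro y
    have htri : D ≤ ‖y - x 0‖ + ‖y - x 1‖ := by
      calc D = ‖(x 0 - y) + (y - x 1)‖ := by rw [hD, sub_add_sub_cancel]
        _ ≤ ‖x 0 - y‖ + ‖y - x 1‖ := norm_add_le _ _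
        _ = ‖y - x 0‖ + ‖y - x 1‖ := by rw [norm_sub_rev]
    have : ‖y - x 0‖ + ‖y - x 1‖ ≤ 2 * f y := by
      have := le_max_left ‖y - x 0‖ ‖y - x 1‖
      have := le_max_right ‖y - x 0‖ ‖y - x 1‖
      simp only [hfdef]; linarith
    linarith
  calc (3/4 : ℝ) * D = (3/2 : ℝ) * (D / 2) := by ring
    _ ≤ (3/2 : ℝ) * ⨅ y : Pt d, f y := by
        apply mul_le_mul_of_nonneg_left hinf; norm_num
end
end

section
/- Let d ≥ 2 and n ≥ 2, and let f be a unanimous, group-strategyproof mechanism for n agents in ℝ^d. Then for every profile x, either R(f(x)) = 0 (the output is deterministic), or there exist agents i, j such that the support of f(x) is contained in the closed segment [x_i, x_j]. -/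
open MeasureTheory ENNReal

noncomputable section

/-- A (randomized) mechanism: each profile is mapped to a Borel probability measure
with finite first moment. -/
def IsMechanism {d n : ℕ} (f : (Fin n → Pt d) → Measure (Pt d)) : Prop :=
  ∀ x, IsProbabilityMeasure (f x) ∧ Integrable (fun y => y) (f x)

/-- Unanimity: if all agents report `z`, the output is the Dirac measure at `z`. -/
def Unanimous {d n : ℕ} (f : (Fin n → Pt d) → Measure (Pt d)) : Prop :=
  ∀ z : Pt d, f (fun _ => z) = Measure.dirac z

/-- The centroid of a distribution `P`: its vector-valued expectation. -/
def centroid {d : ℕ} (P : Measure (Pt d)) : Pt d := ∫ y, y ∂P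

/-- The radius of a distribution `P`: the expected distance to its centroid. -/
def mradius {d : ℕ} (P : Measure (Pt d)) : ℝ := ∫ y, ‖y - centroid P‖ ∂P

/-- The support of a measure: the set of points all of whose neighborhoods have
positive measure (the smallest closed set of full measure). -/
def msupport {α : Type*} [TopologicalSpace α] [MeasurableSpace α] (P : Measure α) : Set α :=
  {y | ∀ U ∈ nhds y, P U ≠ 0}

/-!
Let `P = f x` with centroid `C`. If all agents jointly report a point `z`, unanimity makes the
outcome `δ_z`, so group-strategyproofness yields an agent `k` with `E_P ‖y - x_k‖ ≤ ‖z - x_k‖`.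
Since always `‖C - x_k‖ ≤ E_P ‖y - x_k‖`, taking `z = C` gives an agent `i` with equality, and
taking `z = C - ε (C - x_i)` for small `ε > 0` gives an agent `j` with equality and
`⟪C - x_i, C - x_j⟫ ≤ 0`. Equality in `‖E (y - c)‖ ≤ E ‖y - c‖` forces `P` onto the ray from `c`
through `C`; by the angle condition the rays from `x_i` and `x_j` through `C` meet only in `C`,
unless `C ∈ [x_i, x_j]`, in which case they meet inside `[x_i, x_j]`.
-/

open Filter Topology
open scoped RealInnerProductSpace

lemma mem_segment_of_add_smul_eq {𝕜 E : Type*} [Field 𝕜] [LinearOrder 𝕜] [IsStrictOrderedRing 𝕜]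
    [AddCommGroup E] [Module 𝕜 E] {p q y : E} {a b : 𝕜} (ha : 0 ≤ a) (hb : 0 ≤ b)
    (hab : 0 < a + b) (h : (a + b) • y = a • p + b • q) : y ∈ segment 𝕜 p q :=
  mem_segment_iff_div.2 ⟨a, b, ha, hb, hab, by
    rw [div_eq_inv_mul, div_eq_inv_mul, mul_smul, mul_smul, ← smul_add, ← h,
      inv_smul_smul₀ hab.ne']⟩

lemma mem_segment_and_mem_segment_of_sub_eq_smul {E : Type*} [AddCommGroup E] [Module ℝ E]
    {p q c y : E} {s t : ℝ} (hs : 0 ≤ s) (hs1 : s < 1) (ht1 : 1 < t) (hp : y - p = s • (c - p)) (hq : y - q = t • (c - q)) :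
    c ∈ segment ℝ p q ∧ y ∈ segment ℝ p q := by
  refine ⟨mem_segment_of_add_smul_eq (a := 1 - s) (b := t - 1) (by linarith) (by linarith)
    (by linarith) ?_, mem_segment_of_add_smul_eq (a := t * (1 - s)) (b := s * (t - 1))
    (by nlinarith) (by nlinarith) (by nlinarith) ?_⟩
  · linear_combination (norm := module) hp - hq
  · linear_combination (norm := module) t • hp - s • hq

lemma isClosed_segment {E : Type*} [AddCommGroup E] [Module ℝ E] [TopologicalSpace E]
    [IsTopologicalAddGroup E] [ContinuousSMul ℝ E] [T2Space E] (p q : E) :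
    IsClosed (segment ℝ p q) := by
  rw [← convexHull_pair]
  exact (Set.toFinite {p, q}).isCompact_convexHull (𝕜 := ℝ) |>.isClosed

lemma msupport_eq_support {α : Type*} [TopologicalSpace α] [MeasurableSpace α] (P : Measure α) :
    msupport P = P.support := by
  ext y
  simp [msupport, Measure.mem_support_iff_forall, pos_iff_ne_zero]

section InnerProductSpace

variable {E : Type*} [NormedAddCommGroup E] [InnerProductSpace ℝ E]

lemma eventually_norm_sub_smul_lt {w u : E} (h : 0 < ⟪w, u⟫) :
    ∀ᶠ ε in 𝓝[>] (0 : ℝ), ‖w - ε • u‖ < ‖w‖ := by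
  have hlim : Tendsto (fun ε : ℝ => 2 * ⟪w, u⟫ - ε * ‖u‖ ^ 2) (𝓝 0) (𝓝 (2 * ⟪w, u⟫)) := by
    simpa using (tendsto_const_nhds (x := 2 * ⟪w, u⟫)).sub
      ((tendsto_id (x := 𝓝 (0 : ℝ))).mul_const (‖u‖ ^ 2))
  filter_upwards [self_mem_nhdsWithin,
    nhdsWithin_le_nhds (hlim.eventually (lt_mem_nhds (by linarith : (0 : ℝ) < 2 * ⟪w, u⟫)))]
    with ε (hε : 0 < ε) hpos
  have hsq : ‖w - ε • u‖ ^ 2 = ‖w‖ ^ 2 - ε * (2 * ⟪w, u⟫ - ε * ‖u‖ ^ 2) := by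
    rw [norm_sub_sq_real, inner_smul_right, norm_smul, Real.norm_of_nonneg hε.le]
    ring
  refine lt_of_pow_lt_pow_left₀ 2 (norm_nonneg _) ?_
  rw [hsq]
  nlinarith

/-- Moving `z` from `c` against `u` by a small `ε > 0` escapes every `k` with slack at `c` or with
`⟪u, c - x k⟫ > 0`, so the index blocking such a `z` has neither. -/
lemma exists_eq_norm_sub_and_inner_nonpos {ι : Type*} [Finite ι] (x : ι → E) (D : ι → ℝ)
    (c u : E) (hD : ∀ k, ‖c - x k‖ ≤ D k) (hblock : ∀ z, ∃ k, D k ≤ ‖z - x k‖) :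
    ∃ k, D k = ‖c - x k‖ ∧ ⟪u, c - x k⟫ ≤ 0 := by
  have hescape : ∀ k, ‖c - x k‖ < D k ∨ 0 < ⟪u, c - x k⟫ →
      ∀ᶠ ε in 𝓝[>] (0 : ℝ), ‖c - ε • u - x k‖ < D k := by
    rintro k (hgap | hinner)
    · have hcont : Tendsto (fun ε : ℝ => ‖c - ε • u - x k‖) (𝓝 0) (𝓝 ‖c - x k‖) := by
        simpa using ((tendsto_const_nhds.sub ((tendsto_id (x := 𝓝 (0 : ℝ))).smul_const u)).sub
          tendsto_const_nhds).norm
      exact nhdsWithin_le_nhds (hcont.eventually (gt_mem_nhds hgap))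
    · rw [real_inner_comm] at hinner
      filter_upwards [eventually_norm_sub_smul_lt hinner] with ε hε
      rw [sub_right_comm]
      exact hε.trans_le (hD k)
  obtain ⟨ε, hε⟩ := (eventually_all.2 fun k => eventually_imp_distrib_left.2 (hescape k)).exists
  obtain ⟨k, hk⟩ := hblock (c - ε • u)
  have hk' := mt (hε k) (not_lt.2 hk)
  rw [not_or, not_lt, not_lt] at hk'
  exact ⟨k, le_antisymm hk'.1 (hD k), hk'.2⟩

lemma eq_or_mem_segment_of_sub_eq_smul {p q c y : E} {s t : ℝ} (hs : 0 ≤ s) (ht : 0 ≤ t)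
    (hp : y - p = s • (c - p)) (hq : y - q = t • (c - q)) (hpq : ⟪c - p, c - q⟫ ≤ 0) :
    y = c ∨ c ∈ segment ℝ p q ∧ y ∈ segment ℝ p q := by
  rcases eq_or_ne y c with hyc | hyc
  · exact Or.inl hyc
  right
  have hnorm : ‖y - c‖ ^ 2 = (s - 1) * (t - 1) * ⟪c - p, c - q⟫ := by
    have hp' : y - c = (s - 1) • (c - p) := by linear_combination (norm := module) hp
    have hq' : y - c = (t - 1) • (c - q) := by linear_combination (norm := module) hq
    rw [← real_inner_self_eq_norm_sq]
    nth_rw 1 [hp']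
    rw [hq', real_inner_smul_left, real_inner_smul_right]
    ring
  have hneg : (s - 1) * (t - 1) < 0 := by
    have : 0 < ‖y - c‖ ^ 2 := pow_pos (norm_pos_iff.2 (sub_ne_zero.2 hyc)) 2
    nlinarith
  rcases lt_or_gt_of_ne (show s ≠ 1 by rintro rfl; simp at hneg) with hs1 | hs1
  · exact mem_segment_and_mem_segment_of_sub_eq_smul hs hs1 (by nlinarith) hp hq
  · rw [segment_symm ℝ p q]
    exact mem_segment_and_mem_segment_of_sub_eq_smul ht (by nlinarith) hs1 hq hp

variable [CompleteSpace E] [MeasurableSpace E] {P : Measure E} [IsProbabilityMeasure P]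

lemma integral_id_sub_const (hP : Integrable (fun y => y) P) (c : E) :
    ∫ y, (y - c) ∂P = ∫ y, y ∂P - c := by
  rw [integral_sub hP (integrable_const c), integral_const, probReal_univ, one_smul]

lemma norm_integral_id_sub_le (hP : Integrable (fun y => y) P) (c : E) :
    ‖∫ y, y ∂P - c‖ ≤ ∫ y, ‖y - c‖ ∂P :=
  integral_id_sub_const hP c ▸ norm_integral_le_integral_norm _

lemma ae_sub_eq_smul_of_integral_norm_sub_eq (hP : Integrable (fun y => y) P) {c : E}
    (h : ∫ y, ‖y - c‖ ∂P = ‖∫ y, y ∂P - c‖) :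
    ∀ᵐ y ∂P, ∃ t : ℝ, 0 ≤ t ∧ y - c = t • (∫ y, y ∂P - c) := by
  set a := ∫ y, y ∂P - c
  have hsub : Integrable (fun y => y - c) P := hP.sub (integrable_const c)
  by_cases ha : a = 0
  · rw [ha, norm_zero] at h
    filter_upwards [(integral_eq_zero_iff_of_nonneg (fun _ => norm_nonneg _) hsub.norm).1 h]
      with y hy
    exact ⟨0, le_rfl, by simpa using hy⟩
  have hgap_nonneg : 0 ≤ fun y => ‖a‖ * ‖y - c‖ - ⟪a, y - c⟫ := fun y =>
    sub_nonneg.2 (real_inner_le_norm a _)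
  have hgap_int : Integrable (fun y => ‖a‖ * ‖y - c‖ - ⟪a, y - c⟫) P :=
    (hsub.norm.const_mul _).sub (hsub.const_inner a)
  have hgap : ∫ y, (‖a‖ * ‖y - c‖ - ⟪a, y - c⟫) ∂P = 0 := by
    rw [integral_sub (hsub.norm.const_mul _) (hsub.const_inner a), integral_const_mul,
      integral_inner hsub a, integral_id_sub_const hP, h, real_inner_self_eq_norm_mul_norm,
      sub_self]
  filter_upwards [(integral_eq_zero_iff_of_nonneg hgap_nonneg hgap_int).1 hgap] with y hy
  have hcol := inner_eq_norm_mul_iff_real.1 (sub_eq_zero.1 hy).symm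
  refine ⟨‖y - c‖ / ‖a‖, by positivity, ?_⟩
  rw [div_eq_inv_mul, mul_smul, hcol, inv_smul_smul₀ (norm_ne_zero_iff.2 ha)]

end InnerProductSpace

lemma mradius_eq_zero_of_ae_eq {d : ℕ} {P : Measure (Pt d)} [IsProbabilityMeasure P] {c : Pt d}
    (h : ∀ᵐ y ∂P, y = c) : mradius P = 0 := by
  have hC : centroid P = c := by
    rw [centroid, integral_congr_ae h, integral_const, probReal_univ, one_smul]
  rw [mradius, hC]
  exact integral_eq_zero_of_ae (h.mono fun y hy => by simp [hy])

lemma GroupStrategyproof.exists_integral_norm_sub_le {d n : ℕ} [NeZero n]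
    {f : (Fin n → Pt d) → Measure (Pt d)} (hgsp : GroupStrategyproof f) (huna : Unanimous f)
    (x : Fin n → Pt d) (z : Pt d) : ∃ k, ∫ y, ‖y - x k‖ ∂(f x) ≤ ‖z - x k‖ := by
  obtain ⟨k, -, hk⟩ := hgsp x (fun _ => z) Finset.univ Finset.univ_nonempty
    (fun k hk => absurd (Finset.mem_univ k) hk)
  rw [huna, integral_dirac] at hk
  exact ⟨k, hk⟩

theorem output_deterministic_or_on_segment_general {d n : ℕ} (hn : 2 ≤ n)
    (f : (Fin n → Pt d) → Measure (Pt d))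
    (hmech : IsMechanism f)
    (huna : Unanimous f)
    (hgsp : GroupStrategyproof f) :
    ∀ x : Fin n → Pt d,
      mradius (f x) = 0 ∨ ∃ i j : Fin n, msupport (f x) ⊆ segment ℝ (x i) (x j) := by
  intro x
  have : NeZero n := ⟨by omega⟩
  obtain ⟨hprob, hint⟩ := hmech x
  set C := centroid (f x)
  have hjensen : ∀ k, ‖C - x k‖ ≤ ∫ y, ‖y - x k‖ ∂(f x) := fun k =>
    norm_integral_id_sub_le hint (x k)
  have hblock := hgsp.exists_integral_norm_sub_le huna x
  obtain ⟨i, hi, -⟩ := exists_eq_norm_sub_and_inner_nonpos x _ C 0 hjensen hblock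
  obtain ⟨j, hj, hij⟩ := exists_eq_norm_sub_and_inner_nonpos x _ C (C - x i) hjensen hblock
  have hrays : ∀ᵐ y ∂(f x), y = C ∨ C ∈ segment ℝ (x i) (x j) ∧ y ∈ segment ℝ (x i) (x j) := by
    filter_upwards [ae_sub_eq_smul_of_integral_norm_sub_eq hint hi,
      ae_sub_eq_smul_of_integral_norm_sub_eq hint hj] with y ⟨s, hs, hys⟩ ⟨t, ht, hyt⟩
    exact eq_or_mem_segment_of_sub_eq_smul hs ht hys hyt hij
  by_cases hC : C ∈ segment ℝ (x i) (x j)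
  · refine Or.inr ⟨i, j, msupport_eq_support (f x) ▸
      Measure.support_subset_of_isClosed (isClosed_segment _ _) ?_⟩
    filter_upwards [hrays] with y hy
    exact hy.elim (· ▸ hC) And.right
  · exact Or.inl (mradius_eq_zero_of_ae_eq (hrays.mono fun y hy => hy.resolve_right (hC ·.1)))

/-- Output space reduction: for a unanimous, group-strategyproof mechanism on `n ≥ 2`
agents in `ℝ^d`, `d ≥ 2`, every output is either deterministic or supported on the
segment between two agents' locations. -/
theorem output_deterministic_or_on_segment {d n : ℕ} (hd : 2 ≤ d) (hn : 2 ≤ n)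
    (f : (Fin n → Pt d) → Measure (Pt d))
    (hmech : IsMechanism f)
    (huna : Unanimous f)
    (hgsp : GroupStrategyproof f) :
    ∀ x : Fin n → Pt d,
      mradius (f x) = 0 ∨ ∃ i j : Fin n, msupport (f x) ⊆ segment ℝ (x i) (x j) :=
  output_deterministic_or_on_segment_general hn f hmech huna hgsp
end
end

section
/- Let d ≥ 2 and n = 2, and let f be a unanimous, group-strategyproof mechanism for 2 agents in ℝ^d. Then for every profile (x_1, x_2), the support of f(x_1, x_2) is contained in the closed segment [x_1, x_2]. -/
open MeasureTheory ENNReal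

noncomputable section

/-!
If the expected costs `c₀ = 𝔼‖y - x₀‖` and `c₁ = 𝔼‖y - x₁‖` satisfied `c₀ + c₁ > ‖x₀ - x₁‖`,
the point of `[x₀, x₁]` dividing it in the ratio `c₀ : c₁` would be strictly closer to both
agents than their expected costs, so both agents would gain by jointly reporting it, which
unanimity turns into a deterministic outcome. Hence `c₀ + c₁ ≤ ‖x₀ - x₁‖`, i.e. the nonnegative
function `‖y - x₀‖ + ‖y - x₁‖ - ‖x₀ - x₁‖` has nonpositive mean, so it vanishes almost surely,
and by strict convexity of the Euclidean norm almost every outcome lies on the segment.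
-/

theorem exists_mem_segment_dist_lt {E : Type*} [NormedAddCommGroup E] [NormedSpace ℝ E]
    {a b : E} {c₁ c₂ : ℝ} (h₁ : 0 < c₁) (h₂ : 0 < c₂) (h : dist a b < c₁ + c₂) :
    ∃ z ∈ segment ℝ a b, dist z a < c₁ ∧ dist z b < c₂ := by
  set t := c₁ / (c₁ + c₂)
  have ht : t ∈ Set.Icc (0 : ℝ) 1 :=
    ⟨by positivity, (div_le_one (by positivity)).2 (by linarith)⟩
  have h1t : 1 - t = c₂ / (c₁ + c₂) := by simp only [t]; field_simp; ring
  refine ⟨AffineMap.lineMap a b t, segment_eq_image_lineMap ℝ a b ▸ ⟨t, ht, rfl⟩, ?_, ?_⟩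
  · rw [dist_lineMap_left, Real.norm_of_nonneg ht.1, div_mul_eq_mul_div,
      div_lt_iff₀ (by positivity)]
    nlinarith
  · rw [dist_lineMap_right, Real.norm_of_nonneg (sub_nonneg.2 ht.2), h1t, div_mul_eq_mul_div,
      div_lt_iff₀ (by positivity)]
    nlinarith

section ExpectedDistance

variable {E : Type*} [NormedAddCommGroup E] [MeasurableSpace E] {μ : Measure E}
  [IsProbabilityMeasure μ]

theorem integral_norm_sub_le_add_dist (a : E) {b : E} (hb : Integrable (fun y => ‖y - b‖) μ) :
    ∫ y, ‖y - a‖ ∂μ ≤ ∫ y, ‖y - b‖ ∂μ + dist a b := by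
  calc ∫ y, ‖y - a‖ ∂μ ≤ ∫ y, (‖y - b‖ + dist a b) ∂μ :=
        integral_mono_of_nonneg (.of_forall fun _ => norm_nonneg _)
          (hb.add (integrable_const _)) (.of_forall fun y => by
            simpa only [← dist_eq_norm, dist_comm b a] using dist_triangle y b a)
    _ = ∫ y, ‖y - b‖ ∂μ + dist a b := by
        rw [integral_add hb (integrable_const _), integral_const, probReal_univ, one_smul]

theorem ae_mem_segment_of_integral_add_le [NormedSpace ℝ E] [StrictConvexSpace ℝ E] {a b : E}
    (ha : Integrable (fun y => ‖y - a‖) μ) (hb : Integrable (fun y => ‖y - b‖) μ)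
    (h : ∫ y, ‖y - a‖ ∂μ + ∫ y, ‖y - b‖ ∂μ ≤ dist a b) :
    ∀ᵐ y ∂μ, y ∈ segment ℝ a b := by
  have hab : Integrable (fun y => ‖y - a‖ + ‖y - b‖) μ := ha.add hb
  set g : E → ℝ := fun y => ‖y - a‖ + ‖y - b‖ - dist a b
  have hg_nonneg : 0 ≤ g := fun y => by
    simpa [g, dist_eq_norm, norm_sub_rev a y] using dist_triangle a y b
  have hg_integral : ∫ y, g y ∂μ = 0 := by
    refine le_antisymm ?_ (integral_nonneg hg_nonneg)
    rw [integral_sub hab (integrable_const _), integral_add ha hb, integral_const,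
      probReal_univ, one_smul]
    linarith
  filter_upwards [(integral_eq_zero_iff_of_nonneg hg_nonneg
    (hab.sub (integrable_const _))).1 hg_integral] with y hy
  rw [mem_segment_iff_wbtw, ← dist_add_dist_eq_iff, dist_comm a y, dist_eq_norm, dist_eq_norm]
  simp only [g, Pi.zero_apply] at hy
  linarith

end ExpectedDistance

theorem msupport_subset_of_ae_mem {α : Type*} [TopologicalSpace α] [MeasurableSpace α]
    {μ : Measure α} {s : Set α} (hs : IsClosed s) (h : ∀ᵐ y ∂μ, y ∈ s) : msupport μ ⊆ s :=
  fun _ hy => by_contra fun hys => hy sᶜ (hs.isOpen_compl.mem_nhds hys) (ae_iff.1 h)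

theorem GroupStrategyproof.exists_integral_le_norm_sub {d n : ℕ} [NeZero n]
    {f : (Fin n → Pt d) → Measure (Pt d)} (hgsp : GroupStrategyproof f) (huna : Unanimous f)
    (x : Fin n → Pt d) (z : Pt d) : ∃ i, ∫ y, ‖y - x i‖ ∂(f x) ≤ ‖z - x i‖ := by
  obtain ⟨i, -, hi⟩ := hgsp x (fun _ => z) .univ Finset.univ_nonempty (by simp)
  exact ⟨i, by simpa [huna z, integral_dirac] using hi⟩

theorem GroupStrategyproof.integral_add_le_dist {d : ℕ} {f : (Fin 2 → Pt d) → Measure (Pt d)}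
    (hgsp : GroupStrategyproof f) (huna : Unanimous f) {x : Fin 2 → Pt d}
    [IsProbabilityMeasure (f x)] (h₀ : Integrable (fun y => ‖y - x 0‖) (f x))
    (h₁ : Integrable (fun y => ‖y - x 1‖) (f x)) :
    ∫ y, ‖y - x 0‖ ∂(f x) + ∫ y, ‖y - x 1‖ ∂(f x) ≤ dist (x 0) (x 1) := by
  by_contra! hlt
  have hc₀ := integral_norm_sub_le_add_dist (x 1) h₀
  have hc₁ := integral_norm_sub_le_add_dist (x 0) h₁
  rw [dist_comm] at hc₀
  obtain ⟨z, -, hz₀, hz₁⟩ := exists_mem_segment_dist_lt (by linarith) (by linarith) hlt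
  obtain ⟨i, hi⟩ := hgsp.exists_integral_le_norm_sub huna x z
  rw [← dist_eq_norm] at hi
  fin_cases i
  · exact absurd hi (not_le.2 hz₀)
  · exact absurd hi (not_le.2 hz₁)

theorem two_agents_output_on_segment_general {d : ℕ}
    (f : (Fin 2 → Pt d) → Measure (Pt d))
    (hmech : IsMechanism f)
    (huna : Unanimous f)
    (hgsp : GroupStrategyproof f) :
    ∀ x : Fin 2 → Pt d, msupport (f x) ⊆ segment ℝ (x 0) (x 1) := by
  intro x
  obtain ⟨_, hint⟩ := hmech x
  have h₀ : Integrable (fun y => ‖y - x 0‖) (f x) := (hint.sub (integrable_const _)).norm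
  have h₁ : Integrable (fun y => ‖y - x 1‖) (f x) := (hint.sub (integrable_const _)).norm
  refine msupport_subset_of_ae_mem ?_ <|
    ae_mem_segment_of_integral_add_le h₀ h₁ (hgsp.integral_add_le_dist huna h₀ h₁)
  rw [segment_eq_image_lineMap]
  exact (isCompact_Icc.image AffineMap.lineMap_continuous).isClosed

/-- For `d ≥ 2` and `n = 2`, every unanimous, group-strategyproof mechanism always
outputs a distribution supported on the segment between the two agents. -/
theorem two_agents_output_on_segment {d : ℕ} (hd : 2 ≤ d)
    (f : (Fin 2 → Pt d) → Measure (Pt d))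
    (hmech : IsMechanism f)
    (huna : Unanimous f)
    (hgsp : GroupStrategyproof f) :
    ∀ x : Fin 2 → Pt d, msupport (f x) ⊆ segment ℝ (x 0) (x 1) :=
  two_agents_output_on_segment_general f hmech huna hgsp
end
end

section
/- Let d ≥ 2 and n = 2, and let f be a unanimous, group-strategyproof mechanism for 2 agents in ℝ^d. Then the map (x_1, x_2) ↦ C(f(x_1, x_2)) sending a profile to the centroid of the output distribution is a continuous function from (ℝ^d)² to ℝ^d. -/
open MeasureTheory ENNReal

noncomputable section

/-
Write `cᵢ(x)` for the expected distance from agent `i`'s location to the outcome. The centroid `m`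
satisfies `‖m - xᵢ‖ ≤ cᵢ(x)`, so `‖x₀ - x₁‖ ≤ c₀ + c₁`. Conversely, if `c₀ + c₁ > ‖x₀ - x₁‖`,
the two agents could jointly report a suitable point `z` of the segment `[x₀, x₁]`, and unanimity
makes the outcome `δ_z`, strictly better for both. Hence all these inequalities are equalities,
and by strict convexity of the Euclidean norm `m` is the point of `[x₀, x₁]` at distance `c₀`
from `x₀`. Single-agent strategyproofness makes `cᵢ` 1-Lipschitz in `xᵢ`, and
`c₀ = ‖x₀ - x₁‖ - c₁` transfers this to `x₁`, so `c₀` is Lipschitz. Near the diagonal `m` is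
squeezed to `x₀` because `c₀ ≤ ‖x₀ - x₁‖`.
-/

open Function

section

variable {E : Type*} [NormedAddCommGroup E] [MeasurableSpace E] {μ : Measure E}
  [IsProbabilityMeasure μ]

theorem integral_norm_sub_le_integral_norm_sub_add (hμ : Integrable (fun y => y) μ) (a b : E) :
    ∫ y, ‖y - a‖ ∂μ ≤ ∫ y, ‖y - b‖ ∂μ + ‖a - b‖ := by
  have hb : Integrable (fun y => ‖y - b‖) μ := (hμ.sub (integrable_const b)).norm
  calc ∫ y, ‖y - a‖ ∂μ ≤ ∫ y, (‖y - b‖ + ‖a - b‖) ∂μ :=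
        integral_mono (hμ.sub (integrable_const a)).norm (hb.add (integrable_const _))
          fun y => (norm_sub_le_norm_sub_add_norm_sub y b a).trans_eq (by rw [norm_sub_rev b])
    _ = ∫ y, ‖y - b‖ ∂μ + ‖a - b‖ := by
        rw [integral_add hb (integrable_const _), integral_const, probReal_univ, one_smul]

theorem norm_integral_id_sub_le_s8 [NormedSpace ℝ E] [CompleteSpace E] (hμ : Integrable (fun y => y) μ)
    (a : E) :
    ‖(∫ y, y ∂μ) - a‖ ≤ ∫ y, ‖y - a‖ ∂μ := by
  have : ∫ y, (y - a) ∂μ = (∫ y, y ∂μ) - a := by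
    rw [integral_sub hμ (integrable_const a), integral_const, probReal_univ, one_smul]
  exact this ▸ norm_integral_le_integral_norm _

end

section

variable {E : Type*} [NormedAddCommGroup E] [NormedSpace ℝ E]

theorem exists_norm_sub_eq_of_mem_Icc {a b : E} {s : ℝ} (hs : s ∈ Set.Icc 0 ‖a - b‖) :
    ∃ z : E, ‖z - a‖ = s ∧ ‖z - b‖ = ‖a - b‖ - s := by
  have hD : 0 ≤ ‖a - b‖ := norm_nonneg _
  have hcancel : s / ‖a - b‖ * ‖a - b‖ = s :=
    div_mul_cancel_of_imp fun h => le_antisymm (h ▸ hs.2) hs.1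
  refine ⟨AffineMap.lineMap a b (s / ‖a - b‖), ?_, ?_⟩
  · rw [← dist_eq_norm, dist_lineMap_left, dist_eq_norm, Real.norm_of_nonneg
      (div_nonneg hs.1 hD), hcancel]
  · rw [← dist_eq_norm, dist_lineMap_right, dist_eq_norm, Real.norm_of_nonneg
      (sub_nonneg.2 (div_le_one_of_le₀ hs.2 hD)), sub_mul, one_mul, hcancel]

theorem Continuous.div_norm_smul_of_abs_le {X : Type*} [TopologicalSpace X] {c : X → ℝ}
    {u : X → E} (hc : Continuous c) (hu : Continuous u) (hcu : ∀ x, |c x| ≤ ‖u x‖) :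
    Continuous fun x => (c x / ‖u x‖) • u x := by
  refine continuous_iff_continuousAt.2 fun x₀ => ?_
  by_cases hx₀ : u x₀ = 0
  · have hnorm : ∀ x, ‖(c x / ‖u x‖) • u x‖ = |c x| := fun x => by
      rw [norm_smul, norm_div, norm_norm, Real.norm_eq_abs,
        div_mul_cancel_of_imp fun h => le_antisymm (h ▸ hcu x) (abs_nonneg _)]
    have hlim : Filter.Tendsto (fun x => ‖u x‖) (nhds x₀) (nhds 0) := by
      simpa [hx₀] using hu.norm.tendsto x₀
    simp only [ContinuousAt, hx₀, smul_zero]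
    exact squeeze_zero_norm (fun x => (hnorm x).trans_le (hcu x)) hlim
  · exact (hc.continuousAt.div hu.norm.continuousAt (norm_ne_zero_iff.2 hx₀)).smul
      hu.continuousAt

end

section Mechanism

variable {d : ℕ}

def cost {n : ℕ} (f : (Fin n → Pt d) → Measure (Pt d)) (i : Fin n) (x : Fin n → Pt d) : ℝ :=
  ∫ y, ‖y - x i‖ ∂(f x)

theorem cost_nonneg {n : ℕ} (f : (Fin n → Pt d) → Measure (Pt d)) (i : Fin n)
    (x : Fin n → Pt d) : 0 ≤ cost f i x :=
  integral_nonneg fun _ => norm_nonneg _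

namespace IsMechanism

variable {n : ℕ} {f : (Fin n → Pt d) → Measure (Pt d)}

theorem norm_centroid_sub_le_cost (hmech : IsMechanism f) (x : Fin n → Pt d) (i : Fin n) :
    ‖centroid (f x) - x i‖ ≤ cost f i x :=
  haveI := (hmech x).1
  norm_integral_id_sub_le_s8 (hmech x).2 (x i)

theorem cost_le_cost_add (hmech : IsMechanism f) (x : Fin n → Pt d) (i j : Fin n) :
    cost f i x ≤ cost f j x + ‖x i - x j‖ :=
  haveI := (hmech x).1
  integral_norm_sub_le_integral_norm_sub_add (hmech x).2 (x i) (x j)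

end IsMechanism

namespace GroupStrategyproof

section

variable {n : ℕ} {f : (Fin n → Pt d) → Measure (Pt d)}

theorem cost_le_cost_update_add (hgsp : GroupStrategyproof f) (hmech : IsMechanism f)
    (x : Fin n → Pt d) (i : Fin n) (z : Pt d) :
    cost f i x ≤ cost f i (update x i z) + ‖x i - z‖ := by
  obtain ⟨j, hj, hgain⟩ := hgsp x (update x i z) {i} (Finset.singleton_nonempty i)
    fun j hj => update_of_ne (Finset.notMem_singleton.1 hj) z x
  obtain rfl := Finset.mem_singleton.1 hj
  have := (hmech (update x j z)).1
  calc cost f j x ≤ ∫ y, ‖y - x j‖ ∂(f (update x j z)) := hgain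
    _ ≤ cost f j (update x j z) + ‖x j - z‖ := by
      simpa only [cost, update_self] using
        integral_norm_sub_le_integral_norm_sub_add (hmech (update x j z)).2 (x j) z

theorem dist_cost_update_le (hgsp : GroupStrategyproof f) (hmech : IsMechanism f)
    (x : Fin n → Pt d) (i : Fin n) (z : Pt d) :
    dist (cost f i x) (cost f i (update x i z)) ≤ dist (x i) z := by
  have hback := hgsp.cost_le_cost_update_add hmech (update x i z) i (x i)
  rw [update_idem, update_eq_self, update_self, norm_sub_rev] at hback
  rw [Real.dist_eq, dist_eq_norm, abs_sub_le_iff]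
  constructor <;> linarith [hgsp.cost_le_cost_update_add hmech x i z]

end

variable {f : (Fin 2 → Pt d) → Measure (Pt d)}

theorem cost_zero_add_cost_one_le (hgsp : GroupStrategyproof f) (hmech : IsMechanism f)
    (huna : Unanimous f) (x : Fin 2 → Pt d) :
    cost f 0 x + cost f 1 x ≤ ‖x 0 - x 1‖ := by
  by_contra! hgain
  have h01 := hmech.cost_le_cost_add x 0 1
  have h10 := hmech.cost_le_cost_add x 1 0
  rw [norm_sub_rev] at h10
  obtain ⟨z, hz0, hz1⟩ := exists_norm_sub_eq_of_mem_Icc (a := x 0) (b := x 1)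
    (s := (cost f 0 x + ‖x 0 - x 1‖ - cost f 1 x) / 2) ⟨by linarith, by linarith⟩
  obtain ⟨i, -, hi⟩ := hgsp x (fun _ => z) Finset.univ Finset.univ_nonempty (by simp)
  rw [huna z, integral_dirac] at hi
  fin_cases i
  · change cost f 0 x ≤ ‖z - x 0‖ at hi
    linarith
  · change cost f 1 x ≤ ‖z - x 1‖ at hi
    linarith

theorem norm_centroid_sub_eq_cost (hgsp : GroupStrategyproof f) (hmech : IsMechanism f)
    (huna : Unanimous f) (x : Fin 2 → Pt d) :
    ‖centroid (f x) - x 0‖ = cost f 0 x ∧ ‖centroid (f x) - x 1‖ = ‖x 0 - x 1‖ - cost f 0 x := by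
  have hsum := hgsp.cost_zero_add_cost_one_le hmech huna x
  have h0 := hmech.norm_centroid_sub_le_cost x 0
  have h1 := hmech.norm_centroid_sub_le_cost x 1
  have htri : ‖x 0 - x 1‖ ≤ ‖centroid (f x) - x 0‖ + ‖centroid (f x) - x 1‖ := by
    simpa only [dist_eq_norm] using dist_triangle_left (x 0) (x 1) (centroid (f x))
  constructor <;> linarith

theorem cost_zero_add_cost_one_eq (hgsp : GroupStrategyproof f) (hmech : IsMechanism f)
    (huna : Unanimous f) (x : Fin 2 → Pt d) :
    cost f 0 x + cost f 1 x = ‖x 0 - x 1‖ := by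
  have h1 := hmech.norm_centroid_sub_le_cost x 1
  rw [(hgsp.norm_centroid_sub_eq_cost hmech huna x).2] at h1
  linarith [hgsp.cost_zero_add_cost_one_le hmech huna x]

theorem centroid_eq_add_smul (hgsp : GroupStrategyproof f) (hmech : IsMechanism f)
    (huna : Unanimous f) (x : Fin 2 → Pt d) :
    centroid (f x) = x 0 + (cost f 0 x / ‖x 1 - x 0‖) • (x 1 - x 0) := by
  obtain ⟨h0, h1⟩ := hgsp.norm_centroid_sub_eq_cost hmech huna x
  have hle : cost f 0 x ≤ ‖x 1 - x 0‖ := by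
    rw [norm_sub_rev]; linarith [norm_nonneg (centroid (f x) - x 1)]
  have hcancel : cost f 0 x / ‖x 1 - x 0‖ * ‖x 1 - x 0‖ = cost f 0 x :=
    div_mul_cancel_of_imp fun h => le_antisymm (h ▸ hle) (h0 ▸ norm_nonneg _)
  rw [add_comm, ← AffineMap.lineMap_apply_module']
  apply eq_lineMap_of_dist_eq_mul_of_dist_eq_mul
  · rw [dist_comm, dist_eq_norm, h0, dist_comm, dist_eq_norm, hcancel]
  · rw [dist_eq_norm, h1, dist_comm, dist_eq_norm, sub_mul, one_mul, hcancel, norm_sub_rev]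

theorem lipschitzWith_cost_zero (hgsp : GroupStrategyproof f) (hmech : IsMechanism f)
    (huna : Unanimous f) : LipschitzWith 3 (cost f 0) := by
  refine LipschitzWith.of_dist_le_mul fun x x' => ?_
  set x'' := update x 0 (x' 0)
  have hx''1 : x'' 1 = x 1 := update_of_ne (by decide) _ _
  have hx' : update x'' 1 (x' 1) = x' := by
    ext1 i; fin_cases i <;> simp [x'']
  have h0 : dist (cost f 0 x) (cost f 0 x'') ≤ dist (x 0) (x' 0) :=
    hgsp.dist_cost_update_le hmech x 0 (x' 0)
  have h1 := hgsp.dist_cost_update_le hmech x'' 1 (x' 1)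
  rw [hx', hx''1] at h1
  have hsum'' := hgsp.cost_zero_add_cost_one_eq hmech huna x''
  have hsum' := hgsp.cost_zero_add_cost_one_eq hmech huna x'
  have hD : |‖x'' 0 - x'' 1‖ - ‖x' 0 - x' 1‖| ≤ ‖x 1 - x' 1‖ := by
    simpa [x'', hx''1, norm_sub_rev (x' 1)] using abs_norm_sub_norm_le (x' 0 - x 1) (x' 0 - x' 1)
  have d0 := dist_le_pi_dist x x' 0
  have d1 := dist_le_pi_dist x x' 1
  simp only [dist_eq_norm, Real.norm_eq_abs] at *
  rw [abs_le] at *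
  push_cast
  constructor <;> linarith

end GroupStrategyproof

end Mechanism

theorem two_agents_centroid_continuous_general {d : ℕ}
    (f : (Fin 2 → Pt d) → Measure (Pt d))
    (hmech : IsMechanism f)
    (huna : Unanimous f)
    (hgsp : GroupStrategyproof f) :
    Continuous fun x : Fin 2 → Pt d => centroid (f x) := by
  have hcost := (hgsp.lipschitzWith_cost_zero hmech huna).continuous
  have hbound : ∀ x, |cost f 0 x| ≤ ‖x 1 - x 0‖ := fun x => by
    rw [abs_of_nonneg (cost_nonneg f 0 x), norm_sub_rev]
    linarith [hgsp.cost_zero_add_cost_one_eq hmech huna x, cost_nonneg f 1 x]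
  simp only [hgsp.centroid_eq_add_smul hmech huna]
  exact (continuous_apply 0).add (hcost.div_norm_smul_of_abs_le
    ((continuous_apply 1).sub (continuous_apply 0)) hbound)

/-- For `d ≥ 2` and `n = 2`, the centroid of the output of a unanimous,
group-strategyproof mechanism depends continuously on the profile. -/
theorem two_agents_centroid_continuous {d : ℕ} (hd : 2 ≤ d)
    (f : (Fin 2 → Pt d) → Measure (Pt d))
    (hmech : IsMechanism f)
    (huna : Unanimous f)
    (hgsp : GroupStrategyproof f) :
    Continuous fun x : Fin 2 → Pt d => centroid (f x) :=
  two_agents_centroid_continuous_general f hmech huna hgsp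
end
end

section
/- Let d ≥ 2 and n ≥ 2, and let f be a unanimous, strongly group-strategyproof mechanism for n agents in ℝ^d. Then for every profile x = (x_1, …, x_n) such that the points x_1, …, x_n do not all lie on a common line, the output f(x) is deterministic, i.e., R(f(x)) = 0. -/
/-!
Let `c` be the centroid of `f x`. If the grand coalition jointly reports `c`, unanimity makes the
outcome the point `c`, under which agent `i` pays `‖c - x i‖`, by Jensen at most its current
expected cost. Strong group-strategyproofness therefore forces equality for every agent. Equality
in `‖∫ g‖ ≤ ∫ ‖g‖` in an inner product space puts almost every value of `g` on the ray of `∫ g`,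
so almost every outcome `y` lies on the ray from `x i` through `c`, for every `i`. An outcome
`y ≠ c` would then put every `x i` on the line through `c` and `y`.
-/

open MeasureTheory ENNReal

noncomputable section

/-- Strong group-strategyproofness: no coalition can deviate so that no member is worse
off and at least one member is strictly better off. -/
def StrongGroupStrategyproof {d n : ℕ} (f : (Fin n → Pt d) → Measure (Pt d)) : Prop :=
  ∀ x x' : Fin n → Pt d, ∀ S : Finset (Fin n), S.Nonempty →
    (∀ i ∉ S, x' i = x i) →
    ¬ ((∀ i ∈ S, ∫ y, ‖y - x i‖ ∂(f x') ≤ ∫ y, ‖y - x i‖ ∂(f x)) ∧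
        ∃ i ∈ S, ∫ y, ‖y - x i‖ ∂(f x') < ∫ y, ‖y - x i‖ ∂(f x))

section SameRay

variable {E : Type*} [AddCommGroup E] [Module ℝ E]

theorem mem_affineSpan_pair_of_sameRay_sub {a y c : E} (h : SameRay ℝ (y - a) (c - a))
    (hyc : y ≠ c) : a ∈ line[ℝ, c, y] := by
  have hcol : Collinear ℝ ({a, y, c} : Set E) := by
    rcases wbtw_total_of_sameRay_vsub_left (x := a) (y := y) (z := c) h with hw | hw
    · exact hw.collinear
    · simpa [Set.pair_comm] using hw.collinear
  exact hcol.mem_affineSpan_of_mem_of_ne (by simp) (by simp) (by simp) hyc.symm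

theorem collinear_range_of_forall_sameRay_sub {ι : Type*} {x : ι → E} {c y : E} (hyc : y ≠ c)
    (h : ∀ i, SameRay ℝ (y - x i) (c - x i)) : Collinear ℝ (Set.range x) := by
  rw [collinear_iff_exists_forall_eq_smul_vadd]
  refine ⟨c, y - c, ?_⟩
  rintro _ ⟨i, rfl⟩
  obtain ⟨r, hr⟩ :=
    mem_affineSpan_pair_iff_exists_lineMap_eq.1 (mem_affineSpan_pair_of_sameRay_sub (h i) hyc)
  exact ⟨r, by rw [← hr, AffineMap.lineMap_apply, vsub_eq_sub]⟩

end SameRay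

section Integral

variable {α E : Type*} {m : MeasurableSpace α} {μ : Measure α}
  [NormedAddCommGroup E] [InnerProductSpace ℝ E] [CompleteSpace E]

theorem ae_sameRay_integral_of_integral_norm_eq {f : α → E} (hf : Integrable f μ)
    (h : ∫ ω, ‖f ω‖ ∂μ = ‖∫ ω, f ω ∂μ‖) : ∀ᵐ ω ∂μ, SameRay ℝ (f ω) (∫ ω, f ω ∂μ) := by
  set v := ∫ ω, f ω ∂μ
  have hinner : Integrable (fun ω => inner ℝ v (f ω)) μ := hf.const_inner v
  have hgap : (fun ω => ‖f ω‖ * ‖v‖ - inner ℝ v (f ω)) =ᵐ[μ] 0 := by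
    have hgi : Integrable (fun ω => ‖f ω‖ * ‖v‖ - inner ℝ v (f ω)) μ :=
      (hf.norm.mul_const _).sub hinner
    refine (integral_eq_zero_iff_of_nonneg_ae ?_ hgi).1 ?_
    · refine ae_of_all _ fun ω => sub_nonneg.2 ?_
      simpa [mul_comm] using real_inner_le_norm v (f ω)
    · rw [integral_sub (hf.norm.mul_const _) hinner, integral_mul_const, h, integral_inner hf,
        real_inner_self_eq_norm_mul_norm, sub_self]
  filter_upwards [hgap] with ω hω
  rw [Pi.zero_apply, sub_eq_zero] at hω
  rw [sameRay_iff_norm_smul_eq, ← inner_eq_norm_mul_iff_real, ← hω, mul_comm]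

end Integral

section Centroid

variable {d : ℕ} {P : Measure (Pt d)} [IsProbabilityMeasure P]

theorem integral_sub_eq_centroid_sub (hP : Integrable (fun y => y) P) (a : Pt d) :
    ∫ y, y - a ∂P = centroid P - a := by
  rw [integral_sub hP (integrable_const a), integral_const, probReal_univ, one_smul, centroid]

theorem norm_centroid_sub_le_integral_norm_sub (hP : Integrable (fun y => y) P) (a : Pt d) :
    ‖centroid P - a‖ ≤ ∫ y, ‖y - a‖ ∂P := by
  rw [← integral_sub_eq_centroid_sub hP]
  exact norm_integral_le_integral_norm _

theorem ae_sameRay_centroid_of_integral_norm_sub_eq (hP : Integrable (fun y => y) P) {a : Pt d}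
    (h : ∫ y, ‖y - a‖ ∂P = ‖centroid P - a‖) : ∀ᵐ y ∂P, SameRay ℝ (y - a) (centroid P - a) := by
  rw [← integral_sub_eq_centroid_sub hP] at h ⊢
  exact ae_sameRay_integral_of_integral_norm_eq (hP.sub (integrable_const a)) h

end Centroid

theorem StrongGroupStrategyproof.integral_norm_sub_eq_norm_centroid_sub {d n : ℕ}
    {f : (Fin n → Pt d) → Measure (Pt d)} (hsgsp : StrongGroupStrategyproof f)
    (huna : Unanimous f) {x : Fin n → Pt d} [IsProbabilityMeasure (f x)]
    (hint : Integrable (fun y => y) (f x)) (i : Fin n) :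
    ∫ y, ‖y - x i‖ ∂f x = ‖centroid (f x) - x i‖ := by
  have hle j := norm_centroid_sub_le_integral_norm_sub hint (x j)
  refine le_antisymm ?_ (hle i)
  by_contra! hlt
  refine hsgsp x (fun _ => centroid (f x)) Finset.univ ⟨i, Finset.mem_univ i⟩ (by simp) ?_
  rw [huna]
  simp only [integral_dirac, Finset.mem_univ, forall_const, true_and]
  exact ⟨hle, i, hlt⟩

theorem strong_gsp_deterministic_off_line_general {d n : ℕ}
    (f : (Fin n → Pt d) → Measure (Pt d))
    (hmech : IsMechanism f)
    (huna : Unanimous f)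
    (hsgsp : StrongGroupStrategyproof f) :
    ∀ x : Fin n → Pt d, ¬ Collinear ℝ (Set.range x) → mradius (f x) = 0 := by
  intro x hx
  obtain ⟨hprob, hint⟩ := hmech x
  have hray i : ∀ᵐ y ∂f x, SameRay ℝ (y - x i) (centroid (f x) - x i) :=
    ae_sameRay_centroid_of_integral_norm_sub_eq hint
      (hsgsp.integral_norm_sub_eq_norm_centroid_sub huna hint i)
  have hdirac : ∀ᵐ y ∂f x, y = centroid (f x) := by
    filter_upwards [ae_all_iff.2 hray] with y hy
    by_contra hyc
    exact hx (collinear_range_of_forall_sameRay_sub hyc hy)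
  refine integral_eq_zero_of_ae ?_
  filter_upwards [hdirac] with y hy
  simp [hy]

/-- For `d ≥ 2`, `n ≥ 2`, a unanimous, strongly group-strategyproof mechanism outputs a
deterministic location whenever the agents are not all collinear. -/
theorem strong_gsp_deterministic_off_line {d n : ℕ} (hd : 2 ≤ d) (hn : 2 ≤ n)
    (f : (Fin n → Pt d) → Measure (Pt d))
    (hmech : IsMechanism f)
    (huna : Unanimous f)
    (hsgsp : StrongGroupStrategyproof f) :
    ∀ x : Fin n → Pt d, ¬ Collinear ℝ (Set.range x) → mradius (f x) = 0 :=
  strong_gsp_deterministic_off_line_general f hmech huna hsgsp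
end
end

section
/- Let d ≥ 1, let P be a Borel probability measure on ℝ^d (with the Euclidean norm) with finite first moment, let c = E_{y∼P} y be its centroid, and let x ∈ ℝ^d. Then E_{y∼P} ‖y − x‖ ≥ ‖c − x‖, and equality holds if and only if there exists a unit vector e ∈ ℝ^d such that the support of P is contained in the ray {x + t·e : t ≥ 0}. -/
open MeasureTheory ENNReal

noncomputable section

open scoped RealInnerProductSpace

-- ray as zero set of g
lemma ray_eq {d : ℕ} (x e : Pt d) (he : ‖e‖ = 1) :
    {p : Pt d | ∃ t : ℝ, 0 ≤ t ∧ p = x + t • e} = {p : Pt d | ‖p - x‖ - ⟪p - x, e⟫ = 0} := by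
  ext p
  simp only [Set.mem_setOf_eq, sub_eq_zero]
  constructor
  · rintro ⟨t, ht, rfl⟩
    have : x + t • e - x = t • e := by abel
    rw [this, real_inner_smul_left, real_inner_self_eq_norm_sq, he, norm_smul, he]
    simp [abs_of_nonneg ht]
  · intro h
    have h2 : ⟪p - x, e⟫ = ‖p - x‖ * ‖e‖ := by rw [he]; simpa using h.symm
    rw [inner_eq_norm_mul_iff_real, he, one_smul] at h2
    exact ⟨‖p - x‖, norm_nonneg _, by rw [← h2]; abel⟩

lemma msupport_subset {α : Type*} [TopologicalSpace α] [MeasurableSpace α] (P : Measure α)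
    {S : Set α} (hS : IsClosed S) (h0 : P Sᶜ = 0) : msupport P ⊆ S := by
  intro y hy
  by_contra hyS
  exact hy Sᶜ (hS.isOpen_compl.mem_nhds hyS) h0

lemma compl_msupport_null {α : Type*} [TopologicalSpace α] [MeasurableSpace α]
    [SecondCountableTopology α] (P : Measure α) : P (msupport P)ᶜ = 0 := by
  apply measure_null_of_locally_null
  intro y hy
  simp only [msupport, Set.mem_compl_iff, Set.mem_setOf_eq, not_forall] at hy
  obtain ⟨U, hU, hU0⟩ := hy
  push_neg at hU0
  exact ⟨U, nhdsWithin_le_nhds hU, hU0⟩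

/-- For a Borel probability measure `P` on `ℝ^d` (`d ≥ 1`) with finite first moment and
centroid `c`, and any point `x`: the expected distance from `P` to `x` is at least
`‖c − x‖`, with equality iff `P` is supported on a ray emanating from `x`. -/
theorem expected_dist_ge_dist_to_centroid {d : ℕ} (hd : 1 ≤ d)
    (P : Measure (Pt d)) (hP : IsProbabilityMeasure P)
    (hmom : Integrable (fun y => y) P)
    (c : Pt d) (hc : c = ∫ y, y ∂P) (x : Pt d) :
    ‖c - x‖ ≤ ∫ y, ‖y - x‖ ∂P ∧
      ((∫ y, ‖y - x‖ ∂P) = ‖c - x‖ ↔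
        ∃ e : Pt d, ‖e‖ = 1 ∧ msupport P ⊆ {p : Pt d | ∃ t : ℝ, 0 ≤ t ∧ p = x + t • e}) := by
  have hsub : Integrable (fun y => y - x) P := hmom.sub (integrable_const x)
  have hnorm : Integrable (fun y => ‖y - x‖) P := hsub.norm
  have hint : ∫ y, y - x ∂P = c - x := by
    rw [integral_sub hmom (integrable_const x), integral_const, ← hc]
    simp
  have hle : ‖c - x‖ ≤ ∫ y, ‖y - x‖ ∂P := by
    rw [← hint]
    exact norm_integral_le_integral_norm _
  refine ⟨hle, ?_, ?_⟩
  · -- equality → ray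
    intro heq
    -- choose e
    by_cases hcx : c = x
    case pos =>
      -- P = δ_x a.e.
      have e0 : Pt d := EuclideanSpace.single ⟨0, hd⟩ (1 : ℝ)
      set e : Pt d := EuclideanSpace.single ⟨0, hd⟩ (1 : ℝ) with hedef
      have he : ‖e‖ = 1 := by simp [hedef]
      refine ⟨e, he, ?_⟩
      have h0 : ∫ y, ‖y - x‖ ∂P = 0 := by rw [heq, hcx]; simp
      have hae : ∀ᵐ y ∂P, ‖y - x‖ = 0 :=
        (integral_eq_zero_iff_of_nonneg (fun y => norm_nonneg _) hnorm).1 h0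
      rw [ray_eq x e he]
      apply msupport_subset P
      · exact isClosed_eq (Continuous.sub (continuous_norm.comp (continuous_id.sub continuous_const)) (Continuous.inner (continuous_id.sub continuous_const) continuous_const)) continuous_const
      · have hae2 : ∀ᵐ y ∂P, ‖y - x‖ - ⟪y - x, e⟫ = 0 := by
          refine hae.mono fun y hy => ?_
          have hyx : y = x := by rwa [norm_sub_eq_zero_iff] at hy
          simp [hyx]
        exact ae_iff.1 hae2
    case neg =>
      set e : Pt d := ‖c - x‖⁻¹ • (c - x) with hedef
      have hcx' : c - x ≠ 0 := sub_ne_zero.2 hcx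
      have he : ‖e‖ = 1 := by
        rw [hedef, norm_smul, norm_inv, norm_norm, inv_mul_cancel₀ (norm_ne_zero_iff.2 hcx')]
      refine ⟨e, he, ?_⟩
      have hinner : Integrable (fun y => ⟪y - x, e⟫) P := hsub.inner_const e
      have hg : Integrable (fun y => ‖y - x‖ - ⟪y - x, e⟫) P := hnorm.sub hinner
      have hgnn : ∀ y, 0 ≤ ‖y - x‖ - ⟪y - x, e⟫ := by
        intro y
        have := real_inner_le_norm (y - x) e
        rw [he, mul_one] at this
        linarith
      have hgint : ∫ y, (‖y - x‖ - ⟪y - x, e⟫) ∂P = 0 := by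
        rw [integral_sub hnorm hinner, heq]
        have : ∫ y, ⟪y - x, e⟫ ∂P = ⟪c - x, e⟫ := by
          have hco : ∀ y : Pt d, ⟪y - x, e⟫ = ⟪e, y - x⟫ := fun y => real_inner_comm _ _
          simp_rw [hco]
          rw [integral_inner hsub e, hint, real_inner_comm]
        rw [this, hedef, real_inner_smul_right, real_inner_self_eq_norm_sq, sq,
          mul_comm (‖c - x‖⁻¹), mul_assoc, mul_inv_cancel₀ (norm_ne_zero_iff.2 hcx'), mul_one,
          sub_self]
      have hae : ∀ᵐ y ∂P, ‖y - x‖ - ⟪y - x, e⟫ = 0 :=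
        (integral_eq_zero_iff_of_nonneg hgnn hg).1 hgint
      rw [ray_eq x e he]
      apply msupport_subset P
      · exact isClosed_eq (Continuous.sub (continuous_norm.comp (continuous_id.sub continuous_const)) (Continuous.inner (continuous_id.sub continuous_const) continuous_const)) continuous_const
      · exact ae_iff.1 hae
  · -- ray → equality
    rintro ⟨e, he, hsupp⟩
    have hScompl : P {p : Pt d | ∃ t : ℝ, 0 ≤ t ∧ p = x + t • e}ᶜ = 0 := by
      apply measure_mono_null _ (compl_msupport_null P)
      exact Set.compl_subset_compl.2 hsupp
    have hae : ∀ᵐ y ∂P, ‖y - x‖ = ⟪y - x, e⟫ := by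
      have : ∀ᵐ y ∂P, y ∈ {p : Pt d | ∃ t : ℝ, 0 ≤ t ∧ p = x + t • e} := by
        rw [ae_iff]
        exact hScompl
      refine this.mono ?_
      rintro y ⟨t, ht, rfl⟩
      have h1 : x + t • e - x = t • e := by abel
      rw [h1, real_inner_smul_left, real_inner_self_eq_norm_sq, he, norm_smul, he]
      simp [abs_of_nonneg ht]
    have hinner : Integrable (fun y => ⟪y - x, e⟫) P := hsub.inner_const e
    have h2 : ∫ y, ‖y - x‖ ∂P = ⟪c - x, e⟫ := by
      rw [integral_congr_ae hae]
      have hco : ∀ y : Pt d, ⟪y - x, e⟫ = ⟪e, y - x⟫ := fun y => real_inner_comm _ _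
      simp_rw [hco]
      rw [integral_inner hsub e, hint, real_inner_comm]
    refine le_antisymm ?_ hle
    rw [h2]
    calc ⟪c - x, e⟫ ≤ ‖c - x‖ * ‖e‖ := real_inner_le_norm _ _
      _ = ‖c - x‖ := by rw [he, mul_one]
end
end
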